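/- arXiv:1705.04595 — 3 statements merged into one kernel-verified Lean document; each statement's English description precedes it below -/
import Mathlib

section
/- Let N be even, l ≥ 1 an integer, λ ∈ ℤ^N, n ∈ ℤ, and Δ = 4n − (λ₁² + ⋯ + λ_N²). If λ has at least one even coordinate and at least one odd coordinate, then 𝔇_{2^l}(λ, −Δ) = 2^{l(N−1)}, i.e. 2^{l(1−N)} 𝔇_{2^l}(λ,−Δ) = 1. -/
/-! Pick `j` with `λ_j` even and `k` with `λ_k` odd, and write `Q x = ∑ᵢ (xᵢ² - λᵢ xᵢ)` over
`ℤ/2^l`. Moving along `e_j + e_k` gives `Q (x + t (e_j + e_k)) = Q x + 2t² + ut` with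
`u = 2(x_j + x_k) - λ_j - λ_k` odd, and `t ↦ 2t² + ut` is a permutation since
`(2s² + us) - (2t² + ut) = (s - t)(2(s + t) + u)` and odd elements are units (`2` is nilpotent).
So every line in the direction `e_j + e_k` meets each level set of `Q` exactly once, and each
level set has `2^{lN} / 2^l` points. -/

/-- For the lattice `N A₁` (Gram matrix `2 • 1`), the representation number
`𝔇_a(λ, t) = #{x ∈ (ℤ/aℤ)^N : ∑ᵢ (2xᵢ - λᵢ)² ≡ t (mod 4a)}`
(well defined since the sum modulo `4a` does not depend on the choice of lifts). -/
noncomputable def Dcount (N : ℕ) (a : ℕ) (lam : Fin N → ℤ) (t : ℤ) : ℕ :=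
  Nat.card {x : Fin N → ZMod a //
    (4 * a : ℤ) ∣ (∑ i, (2 * ((x i).val : ℤ) - lam i) ^ 2) - t}

section

variable {R : Type*} [CommRing R]

theorem IsNilpotent.isUnit_of_odd (h2 : IsNilpotent (2 : R)) {u : R} (hu : Odd u) : IsUnit u := by
  obtain ⟨m, rfl⟩ := hu
  exact ((Commute.all 2 m).isNilpotent_mul_right h2).isUnit_add_one

theorem injective_two_mul_sq_add_mul (h2 : IsNilpotent (2 : R)) {u : R} (hu : Odd u) :
    Function.Injective fun t : R => 2 * t ^ 2 + u * t := by
  intro s t hst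
  have hunit : IsUnit (2 * (s + t) + u) := h2.isUnit_of_odd ((even_two_mul _).add_odd hu)
  have hprod : (2 * (s + t) + u) * (s - t) = 0 := by linear_combination hst
  exact sub_eq_zero.mp (hunit.mul_right_eq_zero.mp hprod)

variable {ι : Type*} [Fintype ι] [DecidableEq ι]

theorem sum_sq_sub_mul_add_single_add_single (lam x : ι → R) {j k : ι} (hjk : j ≠ k) (t : R) :
    let y : ι → R := x + Pi.single j t + Pi.single k t
    ∑ i, (y i ^ 2 - lam i * y i)
      = ∑ i, (x i ^ 2 - lam i * x i) + (2 * t ^ 2 + (2 * (x j + x k) - (lam j + lam k)) * t) := by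
  intro y
  rw [← sub_eq_iff_eq_add', ← Finset.sum_sub_distrib,
    Fintype.sum_eq_add j k hjk fun i ⟨hij, hik⟩ => by simp [y, hij, hik]]
  simp [y, hjk, hjk.symm]
  ring

def shearEquiv {j k : ι} (hjk : j ≠ k) : R × {x : ι → R // x j = 0} ≃ (ι → R) where
  toFun p := (p.2 : ι → R) + Pi.single j p.1 + Pi.single k p.1
  invFun x := (x j, ⟨x - Pi.single j (x j) - Pi.single k (x j), by simp [hjk.symm]⟩)
  left_inv p := by ext <;> simp [hjk.symm, p.2.2, add_assoc, sub_sub]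
  right_inv x := by ext; simp [add_assoc, sub_sub]

end

theorem Nat.card_fiber_eq_card_of_bijective_fst {α β γ : Type*} (f : α × β → γ)
    (hf : ∀ b, Function.Bijective fun a => f (a, b)) (c : γ) :
    Nat.card {p : α × β // f p = c} = Nat.card β :=
  Nat.card_congr <| Equiv.ofBijective (fun p => p.1.2)
    ⟨fun p q hpq => by
      obtain ⟨⟨a, b⟩, hp⟩ := p
      obtain ⟨⟨a', b'⟩, hq⟩ := q
      obtain rfl : b = b' := hpq
      obtain rfl : a = a' := (hf b).injective (hp.trans hq.symm)
      rfl,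
    fun b => let ⟨a, ha⟩ := (hf b).surjective c; ⟨⟨(a, b), ha⟩, rfl⟩⟩

theorem card_sum_sq_sub_mul_eq_mul_card {R ι : Type*} [CommRing R] [Finite R] [Fintype ι]
    [DecidableEq ι] (h2 : IsNilpotent (2 : R)) (lam : ι → R) {j k : ι} (hjk : j ≠ k)
    (hjk_odd : Odd (lam j + lam k)) (c : R) :
    Nat.card {x : ι → R // ∑ i, (x i ^ 2 - lam i * x i) = c} * Nat.card R
      = Nat.card R ^ Fintype.card ι := by
  have hfiber := Nat.card_fiber_eq_card_of_bijective_fst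
    (fun p => ∑ i, ((shearEquiv hjk p) i ^ 2 - lam i * (shearEquiv hjk p) i)) (fun _ => by
      refine Finite.injective_iff_bijective.mp fun s t hst => ?_
      simp only [shearEquiv, Equiv.coe_fn_mk, sum_sq_sub_mul_add_single_add_single lam _ hjk,
        add_right_inj] at hst
      exact injective_two_mul_sq_add_mul h2 ((even_two_mul _).sub_odd hjk_odd) hst) c
  rw [Nat.card_congr ((shearEquiv hjk).subtypeEquivOfSubtype).symm, hfiber,
    ← Nat.card_eq_fintype_card, ← Nat.card_fun, ← Nat.card_congr (shearEquiv hjk),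
    Nat.card_prod, mul_comm]

theorem Dcount_eq_card_sum_sq_sub_mul {N a : ℕ} [NeZero a] (lam : Fin N → ℤ) (n : ℤ) :
    Dcount N a lam (-(4 * n - ∑ i, lam i ^ 2))
      = Nat.card {x : Fin N → ZMod a // ∑ i, (x i ^ 2 - (lam i : ZMod a) * x i) = -n} := by
  refine Nat.card_congr (Equiv.subtypeEquivRight fun x => ?_)
  have hsum : ∑ i, (2 * ((x i).val : ℤ) - lam i) ^ 2 - -(4 * n - ∑ i, lam i ^ 2)
      = 4 * (∑ i, (((x i).val : ℤ) ^ 2 - lam i * (x i).val) + n) := by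
    rw [Finset.sum_congr rfl fun i _ => show (2 * ((x i).val : ℤ) - lam i) ^ 2
      = 4 * (((x i).val : ℤ) ^ 2 - lam i * (x i).val) + lam i ^ 2 by ring,
      Finset.sum_add_distrib, ← Finset.mul_sum]
    ring
  rw [hsum, mul_dvd_mul_iff_left four_ne_zero, ← ZMod.intCast_zmod_eq_zero_iff_dvd,
    eq_neg_iff_add_eq_zero]
  push_cast
  simp only [ZMod.natCast_val, ZMod.cast_id', id_eq]

theorem Dcount_two_pow_of_mixed_parity_general
    (N : ℕ) (l : ℕ)
    (lam : Fin N → ℤ) (n : ℤ) (Δ : ℤ) (hΔ : Δ = 4 * n - ∑ i, (lam i) ^ 2)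
    (heven : ∃ i, Even (lam i)) (hodd : ∃ i, Odd (lam i)) :
    Dcount N (2 ^ l) lam (-Δ) = 2 ^ (l * (N - 1)) := by
  obtain ⟨j, hj⟩ := heven
  obtain ⟨k, hk⟩ := hodd
  have hjk : j ≠ k := by rintro rfl; exact Int.not_even_iff_odd.mpr hk hj
  have h2 : IsNilpotent (2 : ZMod (2 ^ l)) := ⟨l, by exact_mod_cast ZMod.natCast_self (2 ^ l)⟩
  have hjk_odd : Odd ((lam j : ZMod (2 ^ l)) + lam k) := by
    exact_mod_cast (hj.add_odd hk).map (Int.castRingHom (ZMod (2 ^ l)))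
  have hcount :=
    card_sum_sq_sub_mul_eq_mul_card h2 (fun i => (lam i : ZMod (2 ^ l))) hjk hjk_odd (-n)
  rw [Nat.card_zmod, Fintype.card_fin] at hcount
  rw [hΔ, Dcount_eq_card_sum_sq_sub_mul]
  refine Nat.eq_of_mul_eq_mul_right (Nat.two_pow_pos l) (hcount.trans ?_)
  rw [← pow_mul, ← pow_add, ← mul_add_one, Nat.sub_one_add_one_eq_of_pos j.pos]

/-- if `N` is even, `l ≥ 1`, `λ ∈ ℤ^N` has at least one even and at least one
odd coordinate, `n ∈ ℤ` and `Δ = 4n - ∑ λᵢ²`, then `𝔇_{2^l}(λ, -Δ) = 2^{l(N-1)}`. -/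
theorem Dcount_two_pow_of_mixed_parity
    (N : ℕ) (hN : Even N) (l : ℕ) (hl : 1 ≤ l)
    (lam : Fin N → ℤ) (n : ℤ) (Δ : ℤ) (hΔ : Δ = 4 * n - ∑ i, (lam i) ^ 2)
    (heven : ∃ i, Even (lam i)) (hodd : ∃ i, Odd (lam i)) :
    Dcount N (2 ^ l) lam (-Δ) = 2 ^ (l * (N - 1)) :=
  Dcount_two_pow_of_mixed_parity_general N l lam n Δ hΔ heven hodd
end

section
/- Let p be an odd prime, l ≥ 1 an integer, λ ∈ ℤ^N, n ∈ ℤ, and Δ = 4n − (λ₁² + ⋯ + λ_N²). Define α(λ) = #{σ ∈ {0,1}^N : ∑_{i : λ_i odd} σ_i ≡ ∑_{i : λ_i even} σ_i (mod 4)} and ω(λ) = #{σ ∈ {0,1}^N : σ₁ + ⋯ + σ_N ≡ −Δ (mod 4)} (equivalently ω(λ) = ∑_{0 ≤ j ≤ N, j ≡ −Δ (mod 4)} C(N,j)). Then α(λ) · 𝔇_{p^l}(λ, −Δ) = ω(λ) · A_N(−Δ, p^l). -/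
/-- `A_N(t, a)` is the number of `x ∈ (ℤ/aℤ)^N` with `x₁² + ⋯ + x_N² ≡ t (mod a)`. -/
noncomputable def Acount (N : ℕ) (a : ℕ) (t : ℤ) : ℕ :=
  Nat.card {x : Fin N → ZMod a // ∑ i, (x i) ^ 2 = (t : ZMod a)}

/-- `α(λ) = #{σ ∈ {0,1}^N : ∑_{i : λᵢ odd} σᵢ ≡ ∑_{i : λᵢ even} σᵢ (mod 4)}`. -/
noncomputable def alphaCount (N : ℕ) (lam : Fin N → ℤ) : ℕ :=
  Nat.card {σ : Fin N → Bool //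
    (Finset.univ.filter fun i => Odd (lam i) ∧ σ i = true).card
      ≡ (Finset.univ.filter fun i => Even (lam i) ∧ σ i = true).card [MOD 4]}

/-- `ω(λ) = #{σ ∈ {0,1}^N : σ₁ + ⋯ + σ_N ≡ -Δ (mod 4)}`. -/
noncomputable def omegaCount (N : ℕ) (t : ℤ) : ℕ :=
  Nat.card {σ : Fin N → Bool //
    ((Finset.univ.filter fun i => σ i = true).card : ℤ) ≡ t [ZMOD 4]}

/-!
Since `p ^ l` is odd, `2` is invertible modulo `p ^ l`, so `x ↦ 2x - λ` permutes `(ℤ/p^lℤ)^N`.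
Both `∑ (2xᵢ - λᵢ)²` and `-Δ` are `≡ ∑ λᵢ² (mod 4)`, so the congruence modulo `4 p^l` defining
`𝔇` is equivalent to the one modulo `p^l` defining `A_N`; hence `𝔇_{p^l}(λ, -Δ) = A_N(-Δ, p^l)`.
Likewise `α(λ) = ω(λ)`: flipping `σᵢ` at the odd coordinates of `λ` turns the condition
`#odd-ones ≡ #even-ones (mod 4)` into `#ones ≡ #{i | λᵢ odd} ≡ ∑ λᵢ² ≡ -Δ (mod 4)`.
-/

open Finset

lemma ZMod.isUnit_two_of_odd {a : ℕ} (ha : Odd a) : IsUnit (2 : ZMod a) := by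
  simpa using (ZMod.isUnit_iff_coprime 2 a).mpr (Nat.coprime_two_left.mpr ha)

lemma Int.four_mul_dvd_sub_iff_intCast_eq {a : ℕ} (ha : Odd a) {s t : ℤ}
    (hst : s ≡ t [ZMOD 4]) : (4 * a : ℤ) ∣ s - t ↔ (s : ZMod a) = t := by
  obtain ⟨m, hm⟩ := hst.symm.dvd
  have h4 : IsUnit (4 : ZMod a) := by
    rw [show (4 : ZMod a) = 2 ^ 2 by norm_num]
    exact (ZMod.isUnit_two_of_odd ha).pow 2
  rw [← sub_eq_zero, ← Int.cast_sub, hm, mul_dvd_mul_iff_left four_ne_zero,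
    ← ZMod.intCast_zmod_eq_zero_iff_dvd, Int.cast_mul, Int.cast_ofNat, h4.mul_right_eq_zero]

lemma Int.two_mul_sub_sq_modEq_sq (x y : ℤ) : (2 * x - y) ^ 2 ≡ y ^ 2 [ZMOD 4] :=
  Int.modEq_iff_dvd.mpr ⟨y * x - x ^ 2, by ring⟩

lemma Int.sq_modEq_four_ite (x : ℤ) : x ^ 2 ≡ if Odd x then 1 else 0 [ZMOD 4] := by
  rcases Int.even_or_odd x with ⟨k, rfl⟩ | hx
  · rw [if_neg (Int.not_odd_iff_even.mpr ⟨k, rfl⟩)]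
    exact Int.modEq_zero_iff_dvd.mpr ⟨k ^ 2, by ring⟩
  · rw [if_pos hx]
    exact Int.sq_mod_four_eq_one_of_odd hx

section

variable {N : ℕ} (lam : Fin N → ℤ)

lemma Dcount_eq_Acount {a : ℕ} (ha : Odd a) {t : ℤ} (ht : t ≡ ∑ i, lam i ^ 2 [ZMOD 4]) :
    Dcount N a lam t = Acount N a t := by
  have : NeZero a := ⟨ha.pos.ne'⟩
  let affine : (Fin N → ZMod a) ≃ (Fin N → ZMod a) := Equiv.piCongrRight fun i =>
    (Units.mulLeft (ZMod.isUnit_two_of_odd ha).unit).trans (Equiv.subRight (lam i : ZMod a))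
  refine Nat.card_congr (Equiv.subtypeEquiv affine fun x => ?_)
  have hsum : ∑ i, (2 * ((x i).val : ℤ) - lam i) ^ 2 ≡ t [ZMOD 4] :=
    (Int.ModEq.sum fun i _ => Int.two_mul_sub_sq_modEq_sq _ _).trans ht.symm
  rw [Int.four_mul_dvd_sub_iff_intCast_eq ha hsum]
  simp [affine]

lemma sum_sq_modEq_card_odd :
    ∑ i, lam i ^ 2 ≡ #{i | Odd (lam i)} [ZMOD 4] := by
  rw [card_filter, Nat.cast_sum]
  exact Int.ModEq.sum fun i _ => by simpa using Int.sq_modEq_four_ite (lam i)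

def flipOdd (σ : Fin N → Bool) (i : Fin N) : Bool :=
  xor (decide (Odd (lam i))) (σ i)

lemma flipOdd_involutive : Function.Involutive (flipOdd lam) := fun σ =>
  funext fun i => by simp [flipOdd]

lemma card_flipOdd (σ : Fin N → Bool) :
    (#{i | flipOdd lam σ i = true} : ℤ)
      = #{i | Odd (lam i)} - #{i | Odd (lam i) ∧ σ i = true}
        + #{i | Even (lam i) ∧ σ i = true} := by
  simp only [card_filter, Nat.cast_sum, Nat.cast_ite, Nat.cast_one, Nat.cast_zero,
    ← sum_sub_distrib, ← sum_add_distrib]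
  refine sum_congr rfl fun i _ => ?_
  rcases Int.even_or_odd' (lam i) with ⟨k, hk | hk⟩ <;> cases hσ : σ i <;>
    simp [flipOdd, hσ, hk, parity_simps]

lemma alphaCount_eq_omegaCount {t : ℤ} (ht : t ≡ #{i | Odd (lam i)} [ZMOD 4]) :
    alphaCount N lam = omegaCount N t := by
  refine Nat.card_congr (Equiv.subtypeEquiv (flipOdd_involutive lam).toPerm fun σ => ?_)
  rw [Function.Involutive.coe_toPerm, ← Int.natCast_modEq_iff, card_flipOdd]
  generalize (#{i | Odd (lam i)} : ℤ) = k at ht ⊢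
  generalize (#{i | Odd (lam i) ∧ σ i = true} : ℤ) = c
  generalize (#{i | Even (lam i) ∧ σ i = true} : ℤ) = d
  have hk : k - c + d ≡ t [ZMOD 4] ↔ k - c + d ≡ k [ZMOD 4] :=
    ⟨fun h => h.trans ht, fun h => h.trans ht.symm⟩
  rw [hk, Int.modEq_iff_dvd, Int.modEq_iff_dvd, Nat.cast_ofNat,
    show k - (k - c + d) = c - d by ring, dvd_sub_comm]

end

theorem alpha_mul_Dcount_eq_omega_mul_Acount_general
    (N : ℕ) (p : ℕ) (hp : p.Prime) (hp2 : p ≠ 2) (l : ℕ)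
    (lam : Fin N → ℤ) (n : ℤ) (Δ : ℤ) (hΔ : Δ = 4 * n - ∑ i, (lam i) ^ 2) :
    alphaCount N lam * Dcount N (p ^ l) lam (-Δ)
      = omegaCount N (-Δ) * Acount N (p ^ l) (-Δ) := by
  have hodd : Odd (p ^ l) := (hp.odd_of_ne_two hp2).pow
  have hΔ4 : -Δ ≡ ∑ i, lam i ^ 2 [ZMOD 4] := Int.modEq_iff_dvd.mpr ⟨n, by rw [hΔ]; ring⟩
  rw [Dcount_eq_Acount lam hodd hΔ4,
    alphaCount_eq_omegaCount lam (hΔ4.trans (sum_sq_modEq_card_odd lam))]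

/-- for an odd prime `p`, `l ≥ 1`, `λ ∈ ℤ^N`, `n ∈ ℤ` and
`Δ = 4n - ∑ λᵢ²`, one has `α(λ) · 𝔇_{p^l}(λ, -Δ) = ω(λ) · A_N(-Δ, p^l)`. -/
theorem alpha_mul_Dcount_eq_omega_mul_Acount
    (N : ℕ) (p : ℕ) (hp : p.Prime) (hp2 : p ≠ 2) (l : ℕ) (hl : 1 ≤ l)
    (lam : Fin N → ℤ) (n : ℤ) (Δ : ℤ) (hΔ : Δ = 4 * n - ∑ i, (lam i) ^ 2) :
    alphaCount N lam * Dcount N (p ^ l) lam (-Δ)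
      = omegaCount N (-Δ) * Acount N (p ^ l) (-Δ) :=
  alpha_mul_Dcount_eq_omega_mul_Acount_general N p hp hp2 l lam n Δ hΔ
end

section
/- Let N ≥ 0 and let A be a subset of {1, …, N} with |A| = j. Then the number of subsets T ⊆ {1, …, N} with |T ∩ A^c| ≡ |T ∩ A| (mod 4) equals the number of subsets T ⊆ {1, …, N} with |T| ≡ N − j (mod 4). Equivalently, ∑_{r=0}^{3} (∑_{i ≥ 0} C(j, 4i+r)) · (∑_{i ≥ 0} C(N−j, 4i+r)) = ∑_{i ≥ 0} C(N, 4i + r₀) where r₀ ∈ {0,1,2,3} is the residue of N − j modulo 4. -/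
/-!
Complementing `T` inside `Aᶜ`, i.e. `T ↦ T ∆ Aᶜ`, is an involution of the subsets of `Fin N`
satisfying `#(T ∆ Aᶜ) + #(T ∩ Aᶜ) = #(T ∩ A) + #Aᶜ`; hence it exchanges the subsets with
`#(T ∩ Aᶜ) ≡ #(T ∩ A)` and those with `#T ≡ #Aᶜ = N - j` (mod 4). Splitting `T` into the pair
`(T ∩ A, T ∩ Aᶜ)` and grouping by the common residue of the two sizes turns the first count into
`∑ r, #{B ⊆ A | #B ≡ r} * #{C ⊆ Aᶜ | #C ≡ r}`, and the binomial sums are exactly these counts of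
subsets with prescribed size residue.
-/

open Finset
open scoped symmDiff

theorem Nat.modEq_iff_modEq_of_add_eq {a b c d n : ℕ} (h : a + b = c + d) :
    a ≡ d [MOD n] ↔ b ≡ c [MOD n] := by
  rw [← Nat.ModEq.add_iff_right (Nat.ModEq.refl b), h, add_comm d b,
    Nat.ModEq.add_iff_right (Nat.ModEq.refl d)]
  exact Nat.ModEq.comm

namespace Finset

variable {α : Type*}

theorem card_filter_powerset_card (s : Finset α) (p : ℕ → Prop) [DecidablePred p] :
    #{T ∈ s.powerset | p #T} = ∑ k ∈ range (#s + 1) with p k, (#s).choose k := by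
  rw [card_filter, sum_powerset_apply_card fun k => if p k then 1 else 0, sum_filter]
  simp only [smul_eq_mul, mul_ite, mul_one, mul_zero]

theorem sum_choose_filter_mod_eq {c n m r : ℕ} (hc : c ≤ n) (hr : r < m) :
    ∑ k ∈ range (c + 1) with k % m = r, c.choose k
      = ∑ i ∈ range (n + 1), c.choose (m * i + r) := by
  have hinj : Set.InjOn (fun i => m * i + r) (range (n + 1)) := fun i _ i' _ h =>
    Nat.eq_of_mul_eq_mul_left (by omega) (Nat.add_right_cancel h)
  rw [← sum_image hinj]
  refine sum_subset (fun k hk => ?_) (fun k hk hk' => ?_)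
  · simp only [mem_filter, mem_range] at hk
    simp only [mem_image, mem_range]
    exact ⟨k / m, by have := Nat.div_le_self k m; omega, by rw [← hk.2, Nat.div_add_mod]⟩
  · obtain ⟨i, -, rfl⟩ := mem_image.1 hk
    simp only [mem_filter, mem_range, Nat.mul_add_mod_self_left, Nat.mod_eq_of_lt hr, and_true,
      not_lt] at hk'
    exact Nat.choose_eq_zero_of_lt hk'

theorem card_filter_powerset_card_mod (s : Finset α) {n m r : ℕ} (hs : #s ≤ n) (hr : r < m) :
    #{T ∈ s.powerset | #T % m = r} = ∑ i ∈ range (n + 1), (#s).choose (m * i + r) := by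
  rw [card_filter_powerset_card s (· % m = r), sum_choose_filter_mod_eq hs hr]

theorem card_filter_product_eq_sum_mul {α β γ : Type*} [DecidableEq γ] (s : Finset α)
    (t : Finset β) (f : α → γ) (g : β → γ) {u : Finset γ} (hf : Set.MapsTo f s u) :
    #{x ∈ s ×ˢ t | f x.1 = g x.2} = ∑ c ∈ u, #{a ∈ s | f a = c} * #{b ∈ t | g b = c} := by
  rw [card_eq_sum_card_fiberwise (f := fun x => f x.1) (t := u)
    fun x hx => hf (mem_product.1 (mem_filter.1 hx).1).1]
  refine sum_congr rfl fun c _ => ?_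
  rw [← card_product, filter_filter, ← filter_product]
  congr 1
  ext x
  simp only [mem_filter]
  grind

theorem card_symmDiff_add_card_inter [DecidableEq α] (s t : Finset α) :
    #(s ∆ t) + #(s ∩ t) = #(s \ t) + #t := by
  rw [Finset.symmDiff_def, card_union_of_disjoint disjoint_sdiff_sdiff, add_assoc, inter_comm,
    card_sdiff_add_card_inter]

variable [DecidableEq α] [Fintype α]

theorem card_symmDiff_compl_modEq_iff (A T : Finset α) (n : ℕ) :
    #(T ∆ Aᶜ) ≡ #Aᶜ [MOD n] ↔ #(T ∩ Aᶜ) ≡ #(T ∩ A) [MOD n] := by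
  refine Nat.modEq_iff_modEq_of_add_eq ?_
  rw [card_symmDiff_add_card_inter, sdiff_compl, inf_eq_inter]

theorem card_filter_inter_compl_modEq_eq_card_filter_modEq (A : Finset α) (n : ℕ) :
    #{T : Finset α | #(T ∩ Aᶜ) ≡ #(T ∩ A) [MOD n]} = #{T : Finset α | #T ≡ #Aᶜ [MOD n]} := by
  refine card_nbij' (· ∆ Aᶜ) (· ∆ Aᶜ) (fun T hT => ?_) (fun T hT => ?_)
    (fun T _ => symmDiff_symmDiff_cancel_right Aᶜ T)
    (fun T _ => symmDiff_symmDiff_cancel_right Aᶜ T)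
  · simp only [coe_filter, mem_univ, true_and, Set.mem_ofPred_eq] at hT ⊢
    exact (card_symmDiff_compl_modEq_iff A T n).2 hT
  · simp only [coe_filter, mem_univ, true_and, Set.mem_ofPred_eq] at hT ⊢
    rw [← card_symmDiff_compl_modEq_iff, symmDiff_symmDiff_cancel_right]
    exact hT

theorem card_filter_eq_card_filter_powerset_product (A : Finset α)
    (p : Finset α → Finset α → Prop) [∀ B C, Decidable (p B C)] :
    #{T : Finset α | p (T ∩ A) (T ∩ Aᶜ)} = #{x ∈ A.powerset ×ˢ Aᶜ.powerset | p x.1 x.2} := by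
  have hsplit : ∀ x ∈ A.powerset ×ˢ Aᶜ.powerset,
      (x.1 ∪ x.2) ∩ A = x.1 ∧ (x.1 ∪ x.2) ∩ Aᶜ = x.2 := by
    intro x hx
    simp only [mem_product, mem_powerset] at hx
    constructor <;> grind [mem_compl]
  refine card_nbij' (fun T => (T ∩ A, T ∩ Aᶜ)) (fun x => x.1 ∪ x.2) (fun T hT => ?_)
    (fun x hx => ?_) (fun T _ => sup_inf_inf_compl)
    (fun x hx => Prod.ext_iff.2 (hsplit x (mem_filter.1 hx).1))
  · simpa using hT
  · obtain ⟨hx, hp⟩ := mem_filter.1 hx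
    obtain ⟨h1, h2⟩ := hsplit x hx
    simpa [h1, h2] using hp

theorem card_filter_inter_compl_modEq_eq_sum_mul (A : Finset α) {m : ℕ} (hm : 0 < m) :
    #{T : Finset α | #(T ∩ Aᶜ) ≡ #(T ∩ A) [MOD m]}
      = ∑ r ∈ range m, #{B ∈ A.powerset | #B % m = r} * #{C ∈ Aᶜ.powerset | #C % m = r} := by
  calc _ = #{T : Finset α | #(T ∩ A) % m = #(T ∩ Aᶜ) % m} := by simp only [Nat.ModEq, eq_comm]
    _ = #{x ∈ A.powerset ×ˢ Aᶜ.powerset | #x.1 % m = #x.2 % m} :=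
      card_filter_eq_card_filter_powerset_product A (fun B C => #B % m = #C % m)
    _ = _ := card_filter_product_eq_sum_mul _ _ (#· % m) (#· % m)
      fun B _ => mem_range.2 (Nat.mod_lt _ hm)

end Finset

/-- let `A ⊆ {1,…,N}` with `|A| = j`. The number of subsets `T` with
`|T ∩ Aᶜ| ≡ |T ∩ A| (mod 4)` equals the number of subsets `T` with `|T| ≡ N - j (mod 4)`;
equivalently `∑_{r=0}^{3} (∑_i C(j,4i+r)) (∑_i C(N-j,4i+r)) = ∑_i C(N,4i+r₀)` where
`r₀ = (N - j) % 4`. -/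
theorem card_subsets_inter_modEq_four
    (N : ℕ) (A : Finset (Fin N)) (j : ℕ) (hj : A.card = j) :
    ((Finset.univ : Finset (Finset (Fin N))).filter
        (fun T => (T ∩ Aᶜ).card ≡ (T ∩ A).card [MOD 4])).card
      = ((Finset.univ : Finset (Finset (Fin N))).filter
          (fun T => T.card ≡ N - j [MOD 4])).card
    ∧ ∑ r ∈ Finset.range 4,
        (∑ i ∈ Finset.range (N + 1), Nat.choose j (4 * i + r))
          * (∑ i ∈ Finset.range (N + 1), Nat.choose (N - j) (4 * i + r))
      = ∑ i ∈ Finset.range (N + 1), Nat.choose N (4 * i + (N - j) % 4) := by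
  have hAc : #Aᶜ = N - j := by rw [card_compl, Fintype.card_fin, hj]
  have hcount := card_filter_inter_compl_modEq_eq_card_filter_modEq A 4
  rw [hAc] at hcount
  refine ⟨hcount, ?_⟩
  have hjN : #A ≤ N := (card_le_univ A).trans_eq (Fintype.card_fin N)
  calc _ = ∑ r ∈ range 4,
        #{B ∈ A.powerset | #B % 4 = r} * #{C ∈ Aᶜ.powerset | #C % 4 = r} := by
        refine sum_congr rfl fun r hr => ?_
        rw [card_filter_powerset_card_mod A hjN (mem_range.1 hr),
          card_filter_powerset_card_mod Aᶜ (hAc ▸ N.sub_le j) (mem_range.1 hr), hj, hAc]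
    _ = #{T | #T ≡ N - j [MOD 4]} := by
      rw [← card_filter_inter_compl_modEq_eq_sum_mul A four_pos, hcount]
    _ = _ := by
      have := card_filter_powerset_card_mod (univ : Finset (Fin N)) (m := 4)
        (r := (N - j) % 4) (card_univ.trans (Fintype.card_fin N)).le (Nat.mod_lt _ four_pos)
      rwa [powerset_univ, card_univ, Fintype.card_fin] at this
end
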